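/- arXiv:1907.10897 — 4 statements merged into one kernel-verified Lean document; each statement's English description precedes it below -/
import Mathlib

section
/- The matrix Q satisfies Q·Qᵀ = I_{n-1}, the identity matrix of size n-1. -/
/-- The matrix `Q` satisfies `Q · Qᵀ = I_{n-1}`. -/
theorem stmt1 (n : ℕ) (hn : 2 ≤ n)
    (v : ℝ) (hv : v = (n - Real.sqrt n) / (n * (n - 1)))
    (Q : Matrix (Fin (n - 1)) (Fin n) ℝ)
    (hQ : ∀ (i : Fin (n - 1)) (j : Fin n),
      Q i j = if (j : ℕ) = 0 then -1 + (n - 1) * v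
              else if (j : ℕ) = (i : ℕ) + 1 then 1 - v else -v) :
    Q * Q.transpose = 1 := by
  have hn2 : (2:ℝ) ≤ (n:ℝ) := by exact_mod_cast hn
  have hs : Real.sqrt n * Real.sqrt n = n := Real.mul_self_sqrt (by linarith)
  have key : (n:ℝ)*((n:ℝ)-1)*v^2 - 2*n*v + 1 = 0 := by
    have h1 : (n:ℝ) ≠ 0 := by linarith
    have h2 : (n:ℝ) - 1 ≠ 0 := by linarith
    rw [hv]
    field_simp
    nlinarith [hs]
  have h0n : 0 < n := by omega
  have hi1 : ∀ m : Fin (n-1), (m:ℕ)+1 < n := fun m => by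
    have := m.isLt; omega
  ext i k
  rw [Matrix.mul_apply]
  simp only [Matrix.transpose_apply]
  by_cases hik : i = k
  · subst hik
    have hpt : ∀ j : Fin n, Q i j * Q i j =
        v^2 + (((n:ℝ)*v-1)^2 - 2*v*((n:ℝ)*v-1)) *
            (if j = (⟨0, h0n⟩ : Fin n) then 1 else 0)
          + (1 - 2*v) * (if j = (⟨(i:ℕ)+1, hi1 i⟩ : Fin n) then 1 else 0) := by
      intro j
      by_cases hj0 : (j:ℕ) = 0 <;> by_cases hj1 : (j:ℕ) = (i:ℕ)+1
      · omega
      · simp [hQ, hj0, hj1, Fin.ext_iff]; ring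
      · simp [hQ, hj0, hj1, Fin.ext_iff]; ring
      · simp [hQ, hj0, hj1, Fin.ext_iff]; ring
    rw [Finset.sum_congr rfl (fun j _ => hpt j)]
    simp only [mul_ite, mul_one, mul_zero]
    rw [Finset.sum_add_distrib, Finset.sum_add_distrib, Finset.sum_const,
      Finset.sum_ite_eq', Finset.sum_ite_eq']
    simp only [Finset.mem_univ, if_true, Finset.card_univ, Fintype.card_fin,
      nsmul_eq_mul, Matrix.one_apply_eq]
    linear_combination key
  · have hvalne : (i:ℕ) ≠ (k:ℕ) := fun h => hik (Fin.ext h)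
    have hpt : ∀ j : Fin n, Q i j * Q k j =
        v^2 + (((n:ℝ)*v-1)^2 - 2*v*((n:ℝ)*v-1)) *
            (if j = (⟨0, h0n⟩ : Fin n) then 1 else 0)
          + (-v) * (if j = (⟨(i:ℕ)+1, hi1 i⟩ : Fin n) then 1 else 0)
          + (-v) * (if j = (⟨(k:ℕ)+1, hi1 k⟩ : Fin n) then 1 else 0) := by
      intro j
      by_cases hj0 : (j:ℕ) = 0 <;> by_cases hj1 : (j:ℕ) = (i:ℕ)+1 <;>
        by_cases hj2 : (j:ℕ) = (k:ℕ)+1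
      · omega
      · omega
      · omega
      · simp [hQ, hj0, hj1, hj2, Fin.ext_iff, hvalne, hvalne.symm]; ring
      · omega
      · simp [hQ, hj0, hj1, hj2, Fin.ext_iff, hvalne, hvalne.symm]; ring
      · simp [hQ, hj0, hj1, hj2, Fin.ext_iff, hvalne, hvalne.symm]; ring
      · simp [hQ, hj0, hj1, hj2, Fin.ext_iff]; ring
    rw [Finset.sum_congr rfl (fun j _ => hpt j)]
    simp only [mul_ite, mul_one, mul_zero]
    rw [Finset.sum_add_distrib, Finset.sum_add_distrib, Finset.sum_add_distrib,
      Finset.sum_const, Finset.sum_ite_eq', Finset.sum_ite_eq', Finset.sum_ite_eq']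
    simp only [Finset.mem_univ, if_true, Finset.card_univ, Fintype.card_fin,
      nsmul_eq_mul, Matrix.one_apply_ne hik]
    linear_combination key
end

section
/- The matrix Q satisfies Qᵀ·Q = I_n - (1/n)·1_n·1_nᵀ, the orthogonal projection onto the complement of the span of the all-ones vector. -/
/-!
Each row of `Q` is `x + e_{i+1}` for the fixed vector `x = (-1 + (n-1)v, -v, …, -v)`, so every
entry of `Qᵀ Q` is a polynomial in `x j`, `x k` and the indicators of `j ≠ 0`, `k ≠ 0`, `j = k`.
With `s = √n` one has `v = 1 / (s (s + 1))`; hence the first coordinate of `x` is `-1/s` and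
`(n - 1) v² - 2v = -1/n`, which are exactly the entries of `I - J/n`.
-/

open Matrix Finset

section Gram

variable {ι κ R : Type*} [Fintype ι] [DecidableEq κ] [CommRing R]

theorem sum_ite_eq_of_injective {σ : ι → κ} (hσ : Function.Injective σ) (j : κ) (c : R) :
    ∑ i, (if σ i = j then c else 0) = if j ∈ univ.image σ then c else 0 := by
  rw [← sum_image (f := fun k => if k = j then c else 0) hσ.injOn, sum_ite_eq']

theorem transpose_mul_self_apply_of_eq_add_ite {σ : ι → κ} (hσ : Function.Injective σ)
    (x : κ → R) {Q : Matrix ι κ R} (hQ : ∀ i j, Q i j = x j + if σ i = j then 1 else 0)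
    (j k : κ) :
    (Qᵀ * Q) j k = Fintype.card ι * x j * x k
      + x j * (if k ∈ univ.image σ then 1 else 0) + (if j ∈ univ.image σ then 1 else 0) * x k
      + if j ∈ univ.image σ ∧ j = k then 1 else 0 := by
  have hprod : ∀ i, (if σ i = j then (1 : R) else 0) * (if σ i = k then 1 else 0)
      = if σ i = j then (if j = k then 1 else 0) else 0 := by
    intro i; by_cases h : σ i = j <;> simp [h]
  simp only [mul_apply, transpose_apply, hQ, add_mul, mul_add, sum_add_distrib, hprod,
    sum_ite_eq_of_injective hσ, ← mul_sum, ← sum_mul, sum_const, card_univ, nsmul_eq_mul]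
  rw [ite_and]
  ring

end Gram

namespace Fin

def succFromPred (n : ℕ) (i : Fin (n - 1)) : Fin n := ⟨i + 1, by omega⟩

theorem succFromPred_eq_iff {n : ℕ} (i : Fin (n - 1)) (j : Fin n) :
    succFromPred n i = j ↔ (j : ℕ) = i + 1 := by
  rw [succFromPred, Fin.ext_iff, eq_comm]

theorem succFromPred_injective (n : ℕ) : Function.Injective (succFromPred n) := by
  intro i i' h
  simpa [succFromPred, Fin.ext_iff] using h

theorem mem_image_succFromPred {n : ℕ} (j : Fin n) :
    j ∈ univ.image (succFromPred n) ↔ (j : ℕ) ≠ 0 := by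
  simp only [mem_image, mem_univ, true_and, succFromPred_eq_iff]
  constructor
  · rintro ⟨i, hi⟩
    omega
  · intro hj
    exact ⟨⟨j - 1, by omega⟩, by simp only; omega⟩

end Fin

theorem sub_sqrt_div_mul_sub_one {x : ℝ} (hx : 0 < x) (hx1 : x ≠ 1) :
    (x - √x) / (x * (x - 1)) = 1 / (√x * (√x + 1)) := by
  have hs : √x ^ 2 = x := Real.sq_sqrt hx.le
  have hs0 : 0 < √x := Real.sqrt_pos.2 hx
  have hx1' : x - 1 ≠ 0 := sub_ne_zero.2 hx1
  set s := √x
  rw [← hs] at hx1' ⊢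
  field_simp
  ring

/-- The matrix `Q` satisfies `Qᵀ · Q = Iₙ - (1/n)·1ₙ·1ₙᵀ`. -/
theorem stmt2 (n : ℕ) (hn : 2 ≤ n)
    (v : ℝ) (hv : v = (n - Real.sqrt n) / (n * (n - 1)))
    (Q : Matrix (Fin (n - 1)) (Fin n) ℝ)
    (hQ : ∀ (i : Fin (n - 1)) (j : Fin n),
      Q i j = if (j : ℕ) = 0 then -1 + (n - 1) * v
              else if (j : ℕ) = (i : ℕ) + 1 then 1 - v else -v) :
    Q.transpose * Q
      = 1 - (1 / (n : ℝ)) • Matrix.of (fun (_ _ : Fin n) => (1 : ℝ)) := by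
  set x : Fin n → ℝ := fun j => if (j : ℕ) = 0 then -1 + (n - 1) * v else -v
  have hQx : ∀ i j, Q i j = x j + if Fin.succFromPred n i = j then 1 else 0 := by
    intro i j
    simp only [hQ, x, Fin.succFromPred_eq_iff]
    split_ifs <;> first | omega | ring
  have hn1 : 1 < (n : ℝ) := by exact_mod_cast hn
  rw [sub_sqrt_div_mul_sub_one (by positivity) hn1.ne'] at hv
  have hs : √(n : ℝ) ^ 2 = n := Real.sq_sqrt (by positivity)
  have hs1 : 1 < √(n : ℝ) := by nlinarith [Real.sqrt_nonneg (n : ℝ)]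
  set s := √(n : ℝ)
  ext j k
  rw [transpose_mul_self_apply_of_eq_add_ite (Fin.succFromPred_injective n) x hQx]
  simp only [Fintype.card_fin, Fin.mem_image_succFromPred, x, Matrix.sub_apply, one_apply,
    Matrix.smul_apply, of_apply, smul_eq_mul, mul_one, Nat.cast_sub (by omega : 1 ≤ n),
    Nat.cast_one, ← hs, hv]
  split_ifs <;> first | omega | (field_simp; ring)
end

section
/- If L ∈ ℝ^{n×n} satisfies L·1_n = 0 and L has a simple eigenvalue 0 with all other eigenvalues having positive real part, then all eigenvalues of Q·L·Qᵀ ∈ ℝ^{(n-1)×(n-1)} have positive real part; in particular Q·L·Qᵀ is nonsingular. -/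
/-!
Completing `Q` by the row `1ᵀ/n` and `Qᵀ` by the column `1` gives mutually inverse matrices
`P`, `S`. Since `L 1 = 0` and `Q 1 = 0`, the matrix `P L S` is block lower triangular with
diagonal blocks `Q L Qᵀ` and `0`, so `χ_L = χ_{Q L Qᵀ} · X`. The simple eigenvalue `0` of `L` is
used up by the factor `X`, hence the eigenvalues of `Q L Qᵀ` are nonzero eigenvalues of `L`.
-/

open Polynomial Matrix

namespace Matrix

variable {m n R : Type*} [Fintype m] [Fintype n] [DecidableEq m] [DecidableEq n] [CommRing R]

theorem charpoly_mul_mul_of_mul_eq_one {P : Matrix m n R} {S : Matrix n m R}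
    (hcard : Fintype.card m = Fintype.card n) (hPS : P * S = 1) (A : Matrix n n R) :
    (P * A * S).charpoly = A.charpoly := by
  have hSP : S * P = 1 := (mul_eq_one_comm_of_card_eq m n R hcard).mp hPS
  refine (isRegular_X_pow (Fintype.card n)).left.eq_iff.mp ?_
  rw [charpoly_mul_comm' (P * A) S, ← Matrix.mul_assoc, hSP, Matrix.one_mul, hcard]

/-- `P = [Q; r]` and `S = [T, u]` are mutually inverse, and `P A S` has zero last column. -/
theorem charpoly_eq_charpoly_mul_mul_X {Q : Matrix m n R} {T : Matrix n m R} {u r : n → R}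
    (hcard : Fintype.card m + 1 = Fintype.card n) (hQT : Q * T = 1) (hQu : Q *ᵥ u = 0)
    (hrT : r ᵥ* T = 0) (hru : r ⬝ᵥ u = 1) {A : Matrix n n R} (hAu : A *ᵥ u = 0) :
    A.charpoly = (Q * A * T).charpoly * X := by
  set P := fromRows Q (replicateRow Unit r)
  set S := fromCols T (replicateCol Unit u)
  have hPS : P * S = 1 := by
    rw [fromRows_mul_fromCols, hQT, ← replicateCol_mulVec, hQu, ← replicateRow_vecMul, hrT,
      replicateRow_mul_replicateCol, hru, ← fromBlocks_one]
    congr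
  have hPAS : P * A * S = fromBlocks (Q * A * T) 0 (replicateRow Unit r * A * T) 0 := by
    have hAcol : A * replicateCol Unit u = 0 := by
      rw [← replicateCol_mulVec, hAu, replicateCol_zero]
    rw [fromRows_mul, fromRows_mul_fromCols]
    simp only [Matrix.mul_assoc, hAcol, Matrix.mul_zero]
  rw [← charpoly_mul_mul_of_mul_eq_one (by simpa using hcard) hPS A, hPAS,
    charpoly_fromBlocks_zero₁₂, charpoly_zero, Fintype.card_unit, pow_one]

end Matrix

theorem Polynomial.not_isRoot_zero_of_rootMultiplicity_mul_X {R : Type*} [CommRing R]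
    {p : R[X]} (hp : p ≠ 0) (h : (p * X).rootMultiplicity 0 = 1) : ¬ p.IsRoot 0 := by
  have := rootMultiplicity_mul_X_sub_C_pow (a := (0 : R)) (n := 1) hp
  rw [map_zero, sub_zero, pow_one, h] at this
  have h0 : p.rootMultiplicity 0 = 0 := by omega
  exact fun hroot => hp (rootMultiplicity_eq_zero_iff.mp h0 hroot)

theorem Matrix.det_ne_zero_of_not_isRoot_charpoly {n R : Type*} [Fintype n] [DecidableEq n]
    [CommRing R] {M : Matrix n n R} (h : ¬ M.charpoly.IsRoot 0) : M.det ≠ 0 := by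
  rw [det_eq_sign_charpoly_coeff, coeff_zero_eq_eval_zero]
  exact (isUnit_neg_one.pow _).mul_right_eq_zero.not.mpr h

theorem stmt5_general (n : ℕ) (hn : 2 ≤ n)
    (L : Matrix (Fin n) (Fin n) ℝ)
    (hL : L.mulVec (fun _ => (1 : ℝ)) = 0)
    (hsimple : ((L.map (Complex.ofReal)).charpoly).rootMultiplicity 0 = 1)
    (hpos : ∀ μ ∈ ((L.map (Complex.ofReal)).charpoly).roots, μ ≠ 0 → 0 < μ.re)
    (Q : Matrix (Fin (n - 1)) (Fin n) ℝ)
    (hQ1 : Q.mulVec (fun _ => (1 : ℝ)) = 0)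
    (hQQt : Q * Q.transpose = 1) :
    (∀ μ ∈ (((Q * L * Q.transpose).map (Complex.ofReal)).charpoly).roots, 0 < μ.re)
    ∧ (Q * L * Q.transpose).det ≠ 0 := by
  set M := Q * L * Q.transpose
  have hn0 : (n : ℝ) ≠ 0 := by exact_mod_cast (by omega : n ≠ 0)
  have hfactor : L.charpoly = M.charpoly * X := by
    refine charpoly_eq_charpoly_mul_mul_X (r := (n : ℝ)⁻¹ • fun _ => 1) (by simp; omega) hQQt hQ1
      ?_ ?_ hL
    · rw [vecMul_transpose, mulVec_smul, hQ1, smul_zero]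
    · simp [dotProduct, hn0]
  have hcharℂ {k : Type} [Fintype k] [DecidableEq k] (A : Matrix k k ℝ) :
      (A.map Complex.ofReal).charpoly = A.charpoly.map Complex.ofRealHom :=
    charpoly_map A Complex.ofRealHom
  have hfactorℂ : (L.map Complex.ofReal).charpoly = (M.map Complex.ofReal).charpoly * X := by
    rw [hcharℂ, hcharℂ, hfactor, Polynomial.map_mul, map_X]
  have hM0 : ¬ (M.map Complex.ofReal).charpoly.IsRoot 0 :=
    not_isRoot_zero_of_rootMultiplicity_mul_X (charpoly_monic _).ne_zero (by rwa [← hfactorℂ])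
  refine ⟨fun μ hμ => hpos μ ?_ ?_, det_ne_zero_of_not_isRoot_charpoly fun h => hM0 ?_⟩
  · rw [hfactorℂ, roots_mul (hfactorℂ ▸ (charpoly_monic _).ne_zero)]
    exact Multiset.mem_add.mpr (Or.inl hμ)
  · rintro rfl
    exact hM0 (isRoot_of_mem_roots hμ)
  · simpa only [hcharℂ, map_zero] using h.map (f := Complex.ofRealHom)

/-- if `L·1ₙ = 0`, `0` is a simple eigenvalue of `L`, and every other
eigenvalue of `L` has positive real part, then all eigenvalues of `Q·L·Qᵀ` have
positive real part; in particular `Q·L·Qᵀ` is nonsingular. Eigenvalues are the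
complex roots of the characteristic polynomial. -/
theorem stmt5 (n : ℕ) (hn : 2 ≤ n)
    (L : Matrix (Fin n) (Fin n) ℝ)
    (hL : L.mulVec (fun _ => (1 : ℝ)) = 0)
    (hsimple : ((L.map (Complex.ofReal)).charpoly).rootMultiplicity 0 = 1)
    (hpos : ∀ μ ∈ ((L.map (Complex.ofReal)).charpoly).roots, μ ≠ 0 → 0 < μ.re)
    (Q : Matrix (Fin (n - 1)) (Fin n) ℝ)
    (hQ1 : Q.mulVec (fun _ => (1 : ℝ)) = 0)
    (hQQt : Q * Q.transpose = 1)
    (hQtQ : Q.transpose * Q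
      = 1 - (1 / (n : ℝ)) • Matrix.of (fun (_ _ : Fin n) => (1 : ℝ))) :
    (∀ μ ∈ (((Q * L * Q.transpose).map (Complex.ofReal)).charpoly).roots, 0 < μ.re)
    ∧ (Q * L * Q.transpose).det ≠ 0 :=
  stmt5_general n hn L hL hsimple hpos Q hQ1 hQQt
end

section
/- If B ∈ ℝ^{n×n} is symmetric, a > 0, and ϑᵀ·B·ϑ ≥ a·‖ϑ‖² for all ϑ ∈ ℝ^n with ςᵀ·ϑ = 0 (for a fixed vector ς ∈ ℝ^n), then for any x ∈ ℝ^{np} satisfying (ςᵀ ⊗ I_p)·x = 0, we have xᵀ·(B ⊗ I_p)·x ≥ a·‖x‖². -/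
open scoped Matrix Kronecker BigOperators

/-- if `B` is symmetric with `ϑᵀBϑ ≥ a‖ϑ‖²` for all `ϑ` orthogonal to
`ς`, then for `x ∈ ℝ^{np}` with `(ςᵀ ⊗ I_p)x = 0` we have
`xᵀ(B ⊗ I_p)x ≥ a‖x‖²`, where `⊗` is the Kronecker product. -/
theorem stmt13 (n p : ℕ) (hp : 1 ≤ p)
    (B : Matrix (Fin n) (Fin n) ℝ) (hsymm : B.IsSymm)
    (ς : Fin n → ℝ) (a : ℝ) (ha : 0 < a)
    (hB : ∀ ϑ : Fin n → ℝ, ς ⬝ᵥ ϑ = 0 → a * (ϑ ⬝ᵥ ϑ) ≤ ϑ ⬝ᵥ B.mulVec ϑ)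
    (x : Fin n × Fin p → ℝ)
    (hx : ∀ k : Fin p, ∑ i : Fin n, ς i * x (i, k) = 0) :
    a * (x ⬝ᵥ x) ≤ x ⬝ᵥ (B ⊗ₖ (1 : Matrix (Fin p) (Fin p) ℝ)).mulVec x := by
  set ϑ : Fin p → Fin n → ℝ := fun k i => x (i, k) with hϑ
  have key : ∀ k : Fin p, a * (ϑ k ⬝ᵥ ϑ k) ≤ ϑ k ⬝ᵥ B.mulVec (ϑ k) := by
    intro k
    exact hB (ϑ k) (hx k)
  have lhs : a * (x ⬝ᵥ x) = ∑ k : Fin p, a * (ϑ k ⬝ᵥ ϑ k) := by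
    simp only [dotProduct, ← Finset.mul_sum]
    rw [Fintype.sum_prod_type, Finset.sum_comm]
  have rhs : x ⬝ᵥ (B ⊗ₖ (1 : Matrix (Fin p) (Fin p) ℝ)).mulVec x
      = ∑ k : Fin p, ϑ k ⬝ᵥ B.mulVec (ϑ k) := by
    simp only [dotProduct, Matrix.mulVec, Matrix.kroneckerMap_apply,
      Matrix.one_apply]
    rw [Fintype.sum_prod_type, Finset.sum_comm]
    refine Finset.sum_congr rfl fun k _ => Finset.sum_congr rfl fun i _ => ?_
    congr 1
    rw [Fintype.sum_prod_type, Finset.sum_comm]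
    simp [mul_ite, Finset.sum_ite_eq', mul_comm]
    rfl
  rw [lhs, rhs]
  exact Finset.sum_le_sum fun k _ => key k
end
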